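/- Let μ be the measure on ℝ² given by μ = (1/2)·(Exp(1) ⊗ Exp(3)) + (1/2)·T, where Exp(λ) denotes the exponential distribution with rate λ (density λe^{−λx} on [0,∞)), Exp(1) ⊗ Exp(3) is the product measure, and T is the pushforward of Exp(2) under the map y ↦ (y, y). Then for every x¹, x² ∈ ℝ, as n → ∞, n·μ( (−∞, (log n)/2 + x¹] × ((log n)/2 + x², ∞) ) → (1/2)( e^{−2x²} − e^{−2x¹} ) if x² < x¹, and n·μ( (−∞, (log n)/2 + x¹] × ((log n)/2 + x², ∞) ) → 0 if x² ≥ x¹. -/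

import Mathlib

open MeasureTheory Filter Set
open scoped ENNReal

/-- The exponential distribution with rate `r`: density `r * exp (-(r * x))` on `[0, ∞)`. -/
noncomputable def expMeas (r : ℝ) : Measure ℝ :=
  volume.withDensity fun x => ENNReal.ofReal (if 0 ≤ x then r * Real.exp (-(r * x)) else 0)

/-- The mixture measure of Example 3.7:
`μ = (1/2)·(Exp(1) ⊗ Exp(3)) + (1/2)·(pushforward of Exp(2) under y ↦ (y,y))`. -/
noncomputable def mixMeas : Measure (ℝ × ℝ) :=
  (1/2 : ℝ≥0∞) • (expMeas 1).prod (expMeas 3) +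
    (1/2 : ℝ≥0∞) • (expMeas 2).map (fun y => (y, y))

/-!
With `a = log n / 2 + x¹` and `b = log n / 2 + x²`, the product component gives the box mass
`P(E₁ ≤ a) · e^{-3b}`, which is `O(n^{-3/2}) = o(1/n)` because the second coordinate has rate `3`.
The diagonal component gives `P(b < E₂ ≤ a) = (e^{-2b} - e^{-2a})⁺`, and since `E₂` has rate `2`
this is exactly `(e^{-2x²} - e^{-2x¹})⁺ / n` as soon as `a, b ≥ 0`.
-/

open ProbabilityTheory Real Topology

namespace ProbabilityTheory

variable (μ : Measure ℝ) [IsProbabilityMeasure μ]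

lemma measureReal_Ioi_eq_one_sub_cdf (x : ℝ) : μ.real (Ioi x) = 1 - cdf μ x := by
  rw [← compl_Iic, probReal_compl_eq_one_sub measurableSet_Iic, cdf_eq_real]

lemma measureReal_Ioc_eq_max_cdf_sub (a b : ℝ) :
    μ.real (Ioc a b) = max (cdf μ b - cdf μ a) 0 := by
  have h := (cdf μ).measure_Ioc a b
  rw [measure_cdf] at h
  rw [measureReal_def, h, ENNReal.toReal_ofReal']

end ProbabilityTheory

lemma expMeas_eq_expMeasure (r : ℝ) : expMeas r = expMeasure r := by
  rw [expMeasure, gammaMeasure, expMeas]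
  congr 1
  funext x
  rw [show gammaPDF 1 r x = exponentialPDF r x from rfl, exponentialPDF_eq]

lemma isProbabilityMeasure_expMeas {r : ℝ} (hr : 0 < r) : IsProbabilityMeasure (expMeas r) := by
  rw [expMeas_eq_expMeasure]
  exact isProbabilityMeasure_expMeasure hr

lemma cdf_expMeas_of_nonneg {r x : ℝ} (hr : 0 < r) (hx : 0 ≤ x) :
    cdf (expMeas r) x = 1 - exp (-(r * x)) := by
  rw [expMeas_eq_expMeasure, cdf_expMeasure_eq hr, if_pos hx]

lemma expMeas_real_Ioi {r x : ℝ} (hr : 0 < r) (hx : 0 ≤ x) :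
    (expMeas r).real (Ioi x) = exp (-(r * x)) := by
  have := isProbabilityMeasure_expMeas hr
  rw [measureReal_Ioi_eq_one_sub_cdf, cdf_expMeas_of_nonneg hr hx, sub_sub_cancel]

lemma expMeas_real_Ioc {r a b : ℝ} (hr : 0 < r) (ha : 0 ≤ a) (hb : 0 ≤ b) :
    (expMeas r).real (Ioc a b) = max (exp (-(r * a)) - exp (-(r * b))) 0 := by
  have := isProbabilityMeasure_expMeas hr
  rw [measureReal_Ioc_eq_max_cdf_sub, cdf_expMeas_of_nonneg hr ha, cdf_expMeas_of_nonneg hr hb,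
    sub_sub_sub_cancel_left]

lemma mixMeas_real_Iic_prod_Ioi (a b : ℝ) :
    mixMeas.real (Iic a ×ˢ Ioi b) =
      1 / 2 * (cdf (expMeas 1) a * (expMeas 3).real (Ioi b)) +
        1 / 2 * (expMeas 2).real (Ioc b a) := by
  have := isProbabilityMeasure_expMeas one_pos
  have := isProbabilityMeasure_expMeas (r := 2) two_pos
  have := isProbabilityMeasure_expMeas (r := 3) three_pos
  have hdiag : (fun y : ℝ => (y, y)) ⁻¹' (Iic a ×ˢ Ioi b) = Ioc b a := by
    ext y; simp [and_comm]
  have := ((expMeas 1).prod (expMeas 3)).smul_finite (c := 1 / 2) (by norm_num)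
  have := ((expMeas 2).map fun y => (y, y)).smul_finite (c := 1 / 2) (by norm_num)
  rw [mixMeas, measureReal_add_apply, measureReal_ennreal_smul_apply,
    measureReal_ennreal_smul_apply, measureReal_prod_prod,
    map_measureReal_apply (by fun_prop) (measurableSet_Iic.prod measurableSet_Ioi), hdiag,
    cdf_eq_real]
  norm_num

lemma mul_exp_neg_mul_half_log_add {t : ℝ} (ht : 0 < t) (r x : ℝ) :
    t * exp (-(r * (log t / 2 + x))) = t ^ (1 - r / 2) * exp (-(r * x)) := by
  nth_rewrite 1 [← exp_log ht]
  rw [rpow_def_of_pos ht, ← exp_add, ← exp_add]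
  ring_nf

lemma tendsto_half_log_natCast_add (x : ℝ) :
    Tendsto (fun n : ℕ => log n / 2 + x) atTop atTop :=
  tendsto_atTop_add_const_right _ x
    ((tendsto_log_atTop.comp tendsto_natCast_atTop_atTop).atTop_div_const two_pos)

lemma natCast_mul_mixMeas_real_eventuallyEq (x1 x2 : ℝ) :
    (fun n : ℕ => (n : ℝ) * mixMeas.real (Iic (log n / 2 + x1) ×ˢ Ioi (log n / 2 + x2)))
      =ᶠ[atTop] fun n => 1 / 2 * (cdf (expMeas 1) (log n / 2 + x1) *
          ((n : ℝ) ^ (-(1 / 2) : ℝ) * exp (-(3 * x2)))) +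
        1 / 2 * max (exp (-(2 * x2)) - exp (-(2 * x1))) 0 := by
  filter_upwards [eventually_gt_atTop 0,
    (tendsto_half_log_natCast_add x1).eventually_ge_atTop 0,
    (tendsto_half_log_natCast_add x2).eventually_ge_atTop 0] with n hn0 ha hb
  have hn : (0 : ℝ) < n := Nat.cast_pos.2 hn0
  have h3 := mul_exp_neg_mul_half_log_add hn 3 x2
  have h2b := mul_exp_neg_mul_half_log_add hn 2 x2
  have h2a := mul_exp_neg_mul_half_log_add hn 2 x1
  norm_num at h3 h2b h2a
  have hmax (d : ℝ) : max ((n : ℝ) * d) 0 = n * max d 0 := by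
    rw [mul_max_of_nonneg _ _ hn.le, mul_zero]
  rw [mixMeas_real_Iic_prod_Ioi, expMeas_real_Ioi three_pos hb, expMeas_real_Ioc two_pos hb ha,
    ← h3, ← h2a, ← h2b, ← mul_sub, hmax]
  ring

theorem tendsto_natCast_mul_mixMeas_real (x1 x2 : ℝ) :
    Tendsto (fun n : ℕ => (n : ℝ) * mixMeas.real (Iic (log n / 2 + x1) ×ˢ Ioi (log n / 2 + x2)))
      atTop (𝓝 (1 / 2 * max (exp (-(2 * x2)) - exp (-(2 * x1))) 0)) := by
  refine Tendsto.congr' (natCast_mul_mixMeas_real_eventuallyEq x1 x2).symm ?_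
  have hcdf := (tendsto_cdf_atTop (expMeas 1)).comp (tendsto_half_log_natCast_add x1)
  have hpow : Tendsto (fun n : ℕ => (n : ℝ) ^ (-(1 / 2) : ℝ)) atTop (𝓝 0) :=
    (tendsto_rpow_neg_atTop (by norm_num)).comp tendsto_natCast_atTop_atTop
  have h := ((hcdf.mul (hpow.mul_const (exp (-(3 * x2))))).const_mul (1 / 2)).add_const
    (1 / 2 * max (exp (-(2 * x2)) - exp (-(2 * x1))) 0)
  rwa [zero_mul, mul_zero, mul_zero, zero_add] at h

theorem mixture_exp_hda_medium_cone_lower_upper :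
    ∀ x1 x2 : ℝ,
      (x2 < x1 →
        Tendsto (fun n : ℕ =>
            (n : ℝ) * (mixMeas
              (Iic (Real.log n / 2 + x1) ×ˢ Ioi (Real.log n / 2 + x2))).toReal)
          atTop (nhds ((1/2) * (Real.exp (-(2 * x2)) - Real.exp (-(2 * x1)))))) ∧
      (x1 ≤ x2 →
        Tendsto (fun n : ℕ =>
            (n : ℝ) * (mixMeas
              (Iic (Real.log n / 2 + x1) ×ˢ Ioi (Real.log n / 2 + x2))).toReal)
          atTop (nhds 0)) := by
  intro x1 x2
  have h := tendsto_natCast_mul_mixMeas_real x1 x2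
  refine ⟨fun hlt => ?_, fun hle => ?_⟩
  · rwa [max_eq_left (sub_nonneg.2 (exp_le_exp.2 (by linarith)))] at h
  · rwa [max_eq_right (sub_nonpos.2 (exp_le_exp.2 (by linarith))), mul_zero] at h
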